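/- arXiv:2210.01262 — 7 statements merged into one kernel-verified Lean document; each statement's English description precedes it below -/
import Mathlib

section
/- For a circle C: |z - c| = r contained in the open unit disk, there exists a triangle inscribed in the unit circle and circumscribed about C if and only if |c|^2 = 1 - 2r. -/
/-!
A chord `[a, b]` of the unit circle is tangent to a circle lying inside the unit disk exactly when
the foot of the perpendicular from the centre `c` to the line `ab` lies at distance `r` from `c`;
the foot then automatically lies on the chord. For unit complex numbers this reads
`(c + a b c̄ - a - b)² = 4 r² a b`. For three distinct vertices the three such equations can be
solved linearly for the symmetric functions of the vertices, leaving `(1 - |c|²)² = 4 r²`.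
Conversely, if `|c|² = 1 - 2r`, an isosceles triangle symmetric about the line `0c` satisfies all
three equations.
-/

open AffineMap Complex ComplexConjugate Metric RealInnerProductSpace

section Tangency

variable {E : Type*} [NormedAddCommGroup E] [InnerProductSpace ℝ E]

def IsTangentSegment (c : E) (r : ℝ) (a b : E) : Prop :=
  (∃! w, w ∈ segment ℝ a b ∧ ‖w - c‖ = r) ∧
    ∀ w ∈ segment ℝ a b, r ≤ ‖w - c‖

theorem exists_inner_lineMap_sub_eq_zero {a b : E} (hab : a ≠ b) (c : E) :
    ∃ t : ℝ, ⟪lineMap a b t - c, b - a⟫ = 0 := by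
  have hba : ‖b - a‖ ^ 2 ≠ 0 := by simpa [sub_eq_zero] using hab.symm
  refine ⟨⟪c - a, b - a⟫ / ‖b - a‖ ^ 2, ?_⟩
  rw [lineMap_apply_module', add_sub_assoc, inner_add_left, real_inner_smul_left,
    real_inner_self_eq_norm_sq, ← neg_sub c a, inner_neg_left, div_mul_cancel₀ _ hba]
  ring

theorem norm_lineMap_sub_sq {a b c : E} {t : ℝ} (horth : ⟪lineMap a b t - c, b - a⟫ = 0)
    (s : ℝ) :
    ‖lineMap a b s - c‖ ^ 2 = ‖lineMap a b t - c‖ ^ 2 + (s - t) ^ 2 * ‖b - a‖ ^ 2 := by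
  have hsplit : lineMap a b s - c = (lineMap a b t - c) + (s - t) • (b - a) := by
    simp only [lineMap_apply_module', sub_smul]; abel
  rw [hsplit, norm_add_sq_real, real_inner_smul_right, horth, norm_smul, mul_pow,
    Real.norm_eq_abs, sq_abs]
  ring

theorem norm_lineMap_sq_of_norm_eq {a b : E} (hnorm : ‖a‖ = ‖b‖) (t : ℝ) :
    ‖lineMap a b t‖ ^ 2 = ‖a‖ ^ 2 - t * (1 - t) * ‖b - a‖ ^ 2 := by
  rw [lineMap_apply_module', add_comm, norm_add_sq_real, real_inner_smul_right, norm_smul,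
    mul_pow, Real.norm_eq_abs, sq_abs, norm_sub_sq_real, inner_sub_right,
    real_inner_self_eq_norm_sq, ← hnorm, real_inner_comm a b]
  ring

theorem lineMap_mem_segment_of_norm_lt {a b : E} (hnorm : ‖a‖ = ‖b‖) {t : ℝ}
    (ht : ‖lineMap a b t‖ < ‖a‖) : lineMap a b t ∈ segment ℝ a b := by
  have hpos : 0 < t * (1 - t) * ‖b - a‖ ^ 2 := by
    have := norm_lineMap_sq_of_norm_eq hnorm t
    nlinarith [norm_nonneg (lineMap a b t)]
  have ht' : 0 < t * (1 - t) := pos_of_mul_pos_left hpos (by positivity)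
  rw [segment_eq_image_lineMap]
  exact ⟨t, ⟨by nlinarith, by nlinarith⟩, rfl⟩

theorem isTangentSegment_iff_norm_lineMap_sub {a b c : E} {r t : ℝ} (hab : a ≠ b)
    (hnorm : ‖a‖ = ‖b‖) (hball : closedBall c r ⊆ ball 0 ‖a‖)
    (horth : ⟪lineMap a b t - c, b - a⟫ = 0) :
    IsTangentSegment c r a b ↔ ‖lineMap a b t - c‖ = r := by
  have hba : 0 < ‖b - a‖ := norm_pos_iff.2 (sub_ne_zero.2 hab.symm)
  have hpyth := norm_lineMap_sub_sq horth
  have hmem : ‖lineMap a b t - c‖ ≤ r → lineMap a b t ∈ segment ℝ a b := fun h =>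
    lineMap_mem_segment_of_norm_lt hnorm (by
      simpa using hball (mem_closedBall_iff_norm.2 h))
  unfold IsTangentSegment
  rw [segment_eq_image_lineMap] at hmem ⊢
  constructor
  · rintro ⟨⟨_, ⟨⟨s, -, rfl⟩, hsr⟩, -⟩, hmin⟩
    have hle : ‖lineMap a b t - c‖ ≤ r := by
      refine (pow_le_pow_iff_left₀ (norm_nonneg _) (hsr ▸ norm_nonneg _) two_ne_zero).1 ?_
      rw [← hsr, hpyth s]
      nlinarith [sq_nonneg (s - t)]
    exact hle.antisymm (hmin _ (hmem hle))
  · intro hr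
    refine ⟨⟨lineMap a b t, ⟨hmem hr.le, hr⟩, ?_⟩, ?_⟩
    · rintro _ ⟨⟨s, -, rfl⟩, hsr⟩
      have := hpyth s
      rw [hsr, hr, left_eq_add] at this
      obtain rfl : s = t := by simpa [hba.ne', sub_eq_zero] using this
      rfl
    · rintro _ ⟨s, -, rfl⟩
      nlinarith [hpyth s, norm_nonneg (lineMap a b s - c)]

end Tangency

theorem add_mul_conj_sub_sub_sq_eq {a b c : ℂ} (ha : ‖a‖ = 1) (hb : ‖b‖ = 1)
    (hab : a ≠ b) {t : ℝ} (horth : ⟪lineMap a b t - c, b - a⟫ = 0) :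
    (c + a * b * conj c - a - b) ^ 2 = 4 * (‖lineMap a b t - c‖ : ℂ) ^ 2 * a * b := by
  set w := lineMap a b t
  have ha1 : a * conj a = 1 := by rw [mul_conj', ha]; norm_num
  have hb1 : b * conj b = 1 := by rw [mul_conj', hb]; norm_num
  have hw : w = t * (b - a) + a := lineMap_apply_ring' a b (t : ℂ)
  have hw' : conj w = t * (conj b - conj a) + conj a := by simp [hw]
  have horth' : (b - a) * conj (w - c) + conj (b - a) * (w - c) = 0 := by
    have := add_conj ((b - a) * conj (w - c))
    rw [← Complex.inner, horth] at this
    simpa using this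
  -- For unit `a`, `b`, a vector `z` is perpendicular to `b - a` iff `z = a * b * conj z`.
  have hperp : w - c = a * b * conj (w - c) := by
    have key : (a - b) * ((w - c) - a * b * conj (w - c)) = 0 := by
      simp only [map_sub] at horth' ⊢
      linear_combination (a * b) * horth' - ((w - c) * a) * hb1 + ((w - c) * b) * ha1
    exact sub_eq_zero.1 ((mul_eq_zero.1 key).resolve_left (sub_ne_zero.2 hab))
  have hline : w + a * b * conj w = a + b := by
    linear_combination hw + (a * b) * hw' + (b - t * b) * ha1 + (t * a) * hb1
  have hchord : c + a * b * conj c - a - b = -2 * (w - c) := by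
    rw [map_sub] at hperp
    linear_combination hline + hperp
  rw [hchord, ← mul_conj']
  linear_combination 4 * (w - c) * hperp

theorem isTangentSegment_iff_sq_eq {a b c : ℂ} {r : ℝ} (ha : ‖a‖ = 1) (hb : ‖b‖ = 1)
    (hab : a ≠ b) (hball : closedBall c r ⊆ ball 0 1) (hr : 0 ≤ r) :
    IsTangentSegment c r a b ↔ (c + a * b * conj c - a - b) ^ 2 = 4 * (r : ℂ) ^ 2 * a * b := by
  obtain ⟨t, horth⟩ := exists_inner_lineMap_sub_eq_zero hab c
  have hab0 : 4 * a * b ≠ 0 := mul_ne_zero (mul_ne_zero (by norm_num)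
    (norm_ne_zero_iff.1 (ha.trans_ne one_ne_zero))) (norm_ne_zero_iff.1 (hb.trans_ne one_ne_zero))
  have hform (x : ℝ) : 4 * (x : ℂ) ^ 2 * a * b = 4 * a * b * ((x ^ 2 : ℝ) : ℂ) := by
    push_cast; ring
  rw [isTangentSegment_iff_norm_lineMap_sub hab (ha.trans hb.symm) (ha ▸ hball) horth,
    add_mul_conj_sub_sub_sq_eq ha hb hab horth, hform, hform, mul_right_inj' hab0, ofReal_inj,
    pow_left_inj₀ (norm_nonneg _) hr two_ne_zero]

theorem one_sub_mul_sq_eq_of_sides {K : Type*} [CommRing K] [IsDomain K] {a b e c k s : K}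
    (hab : a ≠ b) (hbe : b ≠ e) (hae : a ≠ e)
    (hab' : (c + a * b * k - a - b) ^ 2 = 4 * s * a * b)
    (hbe' : (c + b * e * k - b - e) ^ 2 = 4 * s * b * e)
    (hae' : (c + a * e * k - a - e) ^ 2 = 4 * s * a * e) :
    (1 - c * k) ^ 2 = 4 * s := by
  have cancel : ∀ {x y z : K}, x ≠ y → (x - y) * z = 0 → z = 0 := fun hxy h =>
    (mul_eq_zero.1 h).resolve_left (sub_ne_zero.2 hxy)
  have ha : (a * k - 1) * (2 * (c - a)) + (b + e) * (a * k - 1) ^ 2 - 4 * s * a = 0 :=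
    cancel hbe (by linear_combination hab' - hae')
  have hb : (b * k - 1) * (2 * (c - b)) + (a + e) * (b * k - 1) ^ 2 - 4 * s * b = 0 :=
    cancel hae (by linear_combination hab' - hbe')
  have hsym : 4 * s + 2 * (a + b + e) * k - 2 * c * k - 1 - k ^ 2 * (a * b + a * e + b * e) = 0 :=
    cancel hab (by linear_combination hb - ha)
  have hq : 2 * c - (a + b + e) + k ^ 2 * a * b * e = 0 := by
    linear_combination -ha - a * hsym
  linear_combination (k ^ 2 * a * b - 1) * hsym + (k ^ 2 * (a + b) - 2 * k) * hq + k ^ 2 * hab'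

theorem exists_triangle_of_norm_sq_eq {c : ℂ} {r : ℝ} (hr : 0 < r) (h : ‖c‖ ^ 2 = 1 - 2 * r) :
    ∃ a b e : ℂ, ‖a‖ = 1 ∧ ‖b‖ = 1 ∧ ‖e‖ = 1 ∧ a ≠ b ∧ b ≠ e ∧ a ≠ e ∧
      (c + a * b * conj c - a - b) ^ 2 = 4 * (r : ℂ) ^ 2 * a * b ∧
      (c + b * e * conj c - b - e) ^ 2 = 4 * (r : ℂ) ^ 2 * b * e ∧
      (c + a * e * conj c - a - e) ^ 2 = 4 * (r : ℂ) ^ 2 * a * e := by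
  set d := ‖c‖
  set u := cexp (arg c * I)
  have hu : ‖u‖ = 1 := norm_exp_ofReal_mul_I _
  have hu0 : u ≠ 0 := norm_ne_zero_iff.1 (hu.trans_ne one_ne_zero)
  have hu1 : u * conj u = 1 := by rw [mul_conj', hu]; norm_num
  have hc : c = u * d := by rw [mul_comm]; exact (norm_mul_exp_arg_mul_I c).symm
  have hc' : conj c = conj u * d := by simp [hc]
  have hd : (d : ℂ) ^ 2 = 1 - 2 * r := by exact_mod_cast h
  have hy : 0 < 1 - (d - r) ^ 2 := by nlinarith [norm_nonneg c]
  set B : ℂ := ⟨d - r, √(1 - (d - r) ^ 2)⟩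
  have hBim : 0 < B.im := Real.sqrt_pos.2 hy
  have hBnorm : ‖B‖ = 1 := by
    rw [norm_def, normSq_mk, ← sq, ← sq, Real.sq_sqrt hy.le]; norm_num
  have hB : B * conj B = 1 := by rw [mul_conj', hBnorm]; norm_num
  have hBsum : B + conj B = 2 * (d - r) := by
    rw [add_conj, show B.re = d - r from rfl]; push_cast; ring
  have hB1 : 1 ≠ B := fun h => hBim.ne' (by simp [← h])
  have hB1' : 1 ≠ conj B := fun h => hB1 (by simpa using congrArg conj h)
  have hBB : B ≠ conj B := fun h => hBim.ne' (conj_eq_iff_im.1 h.symm)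
  -- Vertices `u`, `u * B`, `u * conj B`, where `u` is the direction of `c`: the base is the chord
  -- perpendicular to `c` touching the circle on the side away from the apex `u`.
  have apex_side : ∀ x : ℂ, x ^ 2 - 2 * (d - r) * x + 1 = 0 →
      (c + u * (u * x) * conj c - u - u * x) ^ 2 = 4 * (r : ℂ) ^ 2 * u * (u * x) := by
    intro x hx
    have hfactor : c + u * (u * x) * conj c - u - u * x = (d - 1) * (1 + x) * u := by
      rw [hc', hc]; linear_combination u * x * d * hu1
    rw [hfactor]
    linear_combination u ^ 2 * (d - 1) ^ 2 * hx - u ^ 2 * ((d - 1) ^ 2 + 1 - d ^ 2 + 2 * r) * x * hd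
  refine ⟨u, u * B, u * conj B, hu, by simp [hu, hBnorm], by simp [hu, hBnorm], ?_, ?_, ?_,
    apex_side B (by linear_combination B * hBsum - hB), ?_,
    apex_side (conj B) (by linear_combination conj B * hBsum - hB)⟩
  · simpa using (mul_right_injective₀ hu0).ne hB1
  · exact (mul_right_injective₀ hu0).ne hBB
  · simpa using (mul_right_injective₀ hu0).ne hB1'
  · have hbase : c + u * B * (u * conj B) * conj c - u * B - u * conj B = 2 * r * u := by
      rw [hc', hc]; linear_combination u * d * B * conj B * hu1 + u * d * hB - u * hBsum
    rw [hbase]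
    linear_combination -4 * r ^ 2 * u ^ 2 * hB

/-- Chapple's formula: for a circle `|z - c| = r` contained in the open unit
disk, there exists a triangle inscribed in the unit circle and circumscribed
about the circle iff `|c|^2 = 1 - 2r`. -/
theorem chapple (c : ℂ) (r : ℝ) (hr : 0 < r)
    (hsub : {z : ℂ | ‖z - c‖ ≤ r} ⊆ {z : ℂ | ‖z‖ < 1}) :
    (∃ z₁ z₂ z₃ : ℂ, ‖z₁‖ = 1 ∧ ‖z₂‖ = 1 ∧ ‖z₃‖ = 1 ∧
      z₁ ≠ z₂ ∧ z₂ ≠ z₃ ∧ z₁ ≠ z₃ ∧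
      ∀ p : ℂ × ℂ, p ∈ ({(z₁, z₂), (z₂, z₃), (z₁, z₃)} : Set (ℂ × ℂ)) →
        (∃! w : ℂ, w ∈ segment ℝ p.1 p.2 ∧ ‖w - c‖ = r) ∧
        (∀ w ∈ segment ℝ p.1 p.2, r ≤ ‖w - c‖)) ↔
    ‖c‖ ^ 2 = 1 - 2 * r := by
  have hball : closedBall c r ⊆ ball 0 1 := fun z hz => by
    simpa using hsub (mem_closedBall_iff_norm.1 hz)
  have tangent_iff {a b : ℂ} (ha : ‖a‖ = 1) (hb : ‖b‖ = 1) (hab : a ≠ b) :=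
    isTangentSegment_iff_sq_eq ha hb hab hball hr.le
  constructor
  · rintro ⟨a, b, e, ha, hb, he, hab, hbe, hae, hsides⟩
    have hrel := one_sub_mul_sq_eq_of_sides hab hbe hae
      ((tangent_iff ha hb hab).1 (hsides (a, b) (by simp)))
      ((tangent_iff hb he hbe).1 (hsides (b, e) (by simp)))
      ((tangent_iff ha he hae).1 (hsides (a, e) (by simp)))
    rw [mul_conj'] at hrel
    have hrel' : (1 - ‖c‖ ^ 2) ^ 2 = (2 * r) ^ 2 := by
      exact_mod_cast (show ((1 - ‖c‖ ^ 2 : ℝ) : ℂ) ^ 2 = ((2 * r : ℝ) : ℂ) ^ 2 by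
        push_cast; linear_combination hrel)
    have hc : ‖c‖ < 1 := by simpa using hball (mem_closedBall_self hr.le)
    have := (pow_left_inj₀ (by nlinarith [norm_nonneg c]) (by positivity) two_ne_zero).1 hrel'
    linarith
  · intro h
    obtain ⟨a, b, e, ha, hb, he, hab, hbe, hae, hab', hbe', hae'⟩ :=
      exists_triangle_of_norm_sq_eq hr h
    refine ⟨a, b, e, ha, hb, he, hab, hbe, hae, ?_⟩
    rintro p (rfl | rfl | rfl)
    exacts [(tangent_iff ha hb hab).2 hab', (tangent_iff hb he hbe).2 hbe',
      (tangent_iff ha he hae).2 hae']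
end

section
/- Let B be a canonical Blaschke product of degree 3 with zeros 0, a₁, a₂ in the unit disk. For each λ on the unit circle, let w₁, w₂, w₃ be the three distinct preimages of λ under B. Then for all j ≠ k, the line through w_j and w_k is tangent to the ellipse {w : |w - a₁| + |w - a₂| = |1 - conj(a₁) a₂|}. -/
/-!
Reflection property of the ellipse: a line is tangent to the ellipse with foci `f₁`, `f₂` and
major axis `r > |f₁ - f₂|` as soon as the mirror image `A` of `f₁` in the line satisfies
`|A - f₂| = r`. Indeed `|p - f₁| + |p - f₂| = |p - A| + |p - f₂| ≥ r` on the line, with equality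
exactly on the segment `[A, f₂]`, which crosses the line once since `f₁` and `f₂` lie strictly on
the same side of it.

For the chord through two preimages `u`, `v` of `λ` on the unit circle, `A = u + v - u v ā₁`.
Clearing denominators in `B(z) = λ` gives a monic cubic whose roots are the three preimages, so
with `w` the third one Vieta's formulas give `u + v + w = a₁ + a₂ + λ ā₁ ā₂` and `u v w = λ`.
These turn `A - a₂` into `(a₁ - w)(1 - ā₁ a₂) / (1 - ā₁ w)`, and `|1 - ā₁ w| = |w - a₁|`
on the unit circle.
-/

open Complex ComplexConjugate

def lineSide (u v z : ℂ) : ℝ := ((z - u) * conj (v - u)).im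

noncomputable def lineReflection (u v z : ℂ) : ℂ := u + (v - u) / conj (v - u) * conj (z - u)

def LineTangentToEllipse (u v f₁ f₂ : ℂ) (r : ℝ) : Prop :=
  (∃! p : ℂ, (∃ s : ℝ, p = u + s • (v - u)) ∧ ‖p - f₁‖ + ‖p - f₂‖ = r) ∧
    ∀ p : ℂ, (∃ s : ℝ, p = u + s • (v - u)) → r ≤ ‖p - f₁‖ + ‖p - f₂‖

lemma exists_mem_segment_eq_zero {E : Type*} [AddCommGroup E] [Module ℝ E] [TopologicalSpace E]
    [IsTopologicalAddGroup E] [ContinuousSMul ℝ E] {g : E → ℝ} (hg : Continuous g) {x y : E}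
    (h : g x * g y ≤ 0) : ∃ p ∈ segment ℝ x y, g p = 0 := by
  have hconn := (convex_segment x y).isPreconnected
  rcases mul_nonpos_iff.1 h with ⟨hx, hy⟩ | ⟨hx, hy⟩
  · exact hconn.intermediate_value (right_mem_segment ℝ x y) (left_mem_segment ℝ x y)
      hg.continuousOn ⟨hy, hx⟩
  · exact hconn.intermediate_value (left_mem_segment ℝ x y) (right_mem_segment ℝ x y)
      hg.continuousOn ⟨hx, hy⟩

section LineGeometry

variable {u v : ℂ}

lemma continuous_lineSide (u v : ℂ) : Continuous (lineSide u v) := by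
  unfold lineSide; fun_prop

lemma lineSide_smul_add_smul {a b : ℝ} (hab : a + b = 1) (x y : ℂ) :
    lineSide u v (a • x + b • y) = a * lineSide u v x + b * lineSide u v y := by
  have h : (a • x + b • y - u) * conj (v - u) =
      a * ((x - u) * conj (v - u)) + b * ((y - u) * conj (v - u)) := by
    have hab' : (a : ℂ) + b = 1 := by exact_mod_cast hab
    rw [Complex.real_smul, Complex.real_smul]
    linear_combination (u * conj (v - u)) * hab'
  simp only [lineSide, h, add_im, im_ofReal_mul]

lemma lineSide_eq_zero_iff (huv : u ≠ v) {p : ℂ} :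
    lineSide u v p = 0 ↔ ∃ s : ℝ, p = u + s • (v - u) := by
  have hd : v - u ≠ 0 := sub_ne_zero.2 huv.symm
  constructor
  · intro h
    refine ⟨((p - u) * conj (v - u)).re / normSq (v - u), ?_⟩
    have hreal : (p - u) * conj (v - u) = (((p - u) * conj (v - u)).re : ℂ) :=
      Complex.ext (by simp) (by simp only [ofReal_im]; exact h)
    rw [Complex.real_smul, ofReal_div, ← hreal, ← mul_conj,
      mul_div_mul_right _ _ ((map_ne_zero conj).2 hd), div_mul_cancel₀ _ hd, add_sub_cancel]
  · rintro ⟨s, rfl⟩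
    simp only [lineSide, Complex.real_smul, add_sub_cancel_left, mul_assoc, mul_conj,
      ← ofReal_mul, ofReal_im]

lemma lineSide_lineReflection (huv : u ≠ v) (z : ℂ) :
    lineSide u v (lineReflection u v z) = -lineSide u v z := by
  have hd : conj (v - u) ≠ 0 := (map_ne_zero conj).2 (sub_ne_zero.2 huv.symm)
  have h : (lineReflection u v z - u) * conj (v - u) = conj ((z - u) * conj (v - u)) := by
    simp only [lineReflection, map_mul, conj_conj]; field_simp; ring
  rw [lineSide, h, conj_im, lineSide]

lemma norm_sub_lineReflection (huv : u ≠ v) {p : ℂ} (hp : ∃ s : ℝ, p = u + s • (v - u)) (z : ℂ) :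
    ‖p - lineReflection u v z‖ = ‖p - z‖ := by
  obtain ⟨s, rfl⟩ := hp
  have hd : v - u ≠ 0 := sub_ne_zero.2 huv.symm
  have hd' : conj (v - u) ≠ 0 := (map_ne_zero conj).2 hd
  have h : u + s • (v - u) - lineReflection u v z =
      (v - u) / conj (v - u) * conj (u + s • (v - u) - z) := by
    rw [show u + s • (v - u) - z = s * (v - u) - (z - u) by rw [Complex.real_smul]; ring,
      map_sub conj (s * (v - u)), map_mul conj (s : ℂ), conj_ofReal, lineReflection,
      Complex.real_smul]
    field_simp
    ring
  rw [h, norm_mul, norm_div, norm_conj, norm_conj, div_self (norm_ne_zero_iff.2 hd), one_mul]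

lemma eq_of_mem_segment_of_lineSide_eq_zero {x y p q : ℂ}
    (hxy : lineSide u v x * lineSide u v y < 0) (hp : p ∈ segment ℝ x y)
    (hq : q ∈ segment ℝ x y) (hp₀ : lineSide u v p = 0) (hq₀ : lineSide u v q = 0) : p = q := by
  obtain ⟨a, b, -, -, hab, rfl⟩ := hp
  obtain ⟨a', b', -, -, hab', rfl⟩ := hq
  rw [lineSide_smul_add_smul hab] at hp₀
  rw [lineSide_smul_add_smul hab'] at hq₀
  have hne : lineSide u v x - lineSide u v y ≠ 0 := by
    intro h
    rw [show lineSide u v x = lineSide u v y by linarith] at hxy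
    nlinarith [mul_self_nonneg (lineSide u v y)]
  have hb : b = b' := by
    apply mul_left_cancel₀ hne
    linear_combination hq₀ - hp₀ + lineSide u v x * (hab - hab')
  obtain rfl : a = a' := by linarith
  rw [hb]

theorem lineTangentToEllipse_of_norm_lineReflection_sub (huv : u ≠ v) {f₁ f₂ : ℂ} {r : ℝ}
    (hr : ‖lineReflection u v f₁ - f₂‖ = r) (hf : ‖f₁ - f₂‖ < r) :
    LineTangentToEllipse u v f₁ f₂ r := by
  set A := lineReflection u v f₁
  have hsum : ∀ p, (∃ s : ℝ, p = u + s • (v - u)) → ‖p - f₁‖ + ‖p - f₂‖ = dist A p + dist p f₂ :=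
    fun p hp => by rw [← norm_sub_lineReflection huv hp f₁, dist_comm, dist_eq_norm, dist_eq_norm]
  have hle : ∀ p, (∃ s : ℝ, p = u + s • (v - u)) → r ≤ ‖p - f₁‖ + ‖p - f₂‖ := fun p hp => by
    rw [hsum p hp, ← hr, ← dist_eq_norm]; exact dist_triangle _ _ _
  have hsame : 0 < lineSide u v f₁ * lineSide u v f₂ := by
    by_contra! h
    obtain ⟨p, hp, hp₀⟩ := exists_mem_segment_eq_zero (continuous_lineSide u v) h
    have := hle p ((lineSide_eq_zero_iff huv).1 hp₀)
    rw [← dist_eq_norm, ← dist_eq_norm, dist_comm, dist_add_dist_of_mem_segment hp,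
      dist_eq_norm] at this
    linarith
  have hopp : lineSide u v A * lineSide u v f₂ < 0 := by
    rw [lineSide_lineReflection huv]; linarith
  obtain ⟨p, hp, hp₀⟩ := exists_mem_segment_eq_zero (continuous_lineSide u v) hopp.le
  have hp' := (lineSide_eq_zero_iff huv).1 hp₀
  refine ⟨⟨p, ⟨hp', ?_⟩, ?_⟩, hle⟩
  · rw [hsum p hp', dist_add_dist_of_mem_segment hp, dist_eq_norm, hr]
  · rintro q ⟨hq, hqr⟩
    rw [hsum q hq, ← hr, ← dist_eq_norm, dist_add_dist_eq_iff] at hqr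
    exact eq_of_mem_segment_of_lineSide_eq_zero hopp hqr.mem_segment hp
      ((lineSide_eq_zero_iff huv).2 hq) hp₀

end LineGeometry

lemma exists_mem_ne_ne_of_triple {α : Type*} {x y z : α} (hxy : x ≠ y) (hyz : y ≠ z)
    (hxz : x ≠ z) (u v : α) : ∃ w ∈ ({x, y, z} : Set α), w ≠ u ∧ w ≠ v := by
  simp only [Set.mem_insert_iff, Set.mem_singleton_iff, exists_eq_or_imp, exists_eq_left]
  grind

lemma vieta_of_cubic {R : Type*} [CommRing R] [NoZeroDivisors R] {c₂ c₁ c₀ u v w : R}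
    (huv : u ≠ v) (huw : u ≠ w) (hvw : v ≠ w)
    (hu : u ^ 3 - c₂ * u ^ 2 + c₁ * u - c₀ = 0) (hv : v ^ 3 - c₂ * v ^ 2 + c₁ * v - c₀ = 0)
    (hw : w ^ 3 - c₂ * w ^ 2 + c₁ * w - c₀ = 0) :
    u + v + w = c₂ ∧ u * v * w = c₀ := by
  have huv' : u ^ 2 + u * v + v ^ 2 - c₂ * (u + v) + c₁ = 0 := by
    refine (mul_eq_zero.1 ?_).resolve_left (sub_ne_zero.2 huv)
    linear_combination hu - hv
  have huw' : u ^ 2 + u * w + w ^ 2 - c₂ * (u + w) + c₁ = 0 := by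
    refine (mul_eq_zero.1 ?_).resolve_left (sub_ne_zero.2 huw)
    linear_combination hu - hw
  have hsum : u + v + w - c₂ = 0 := by
    refine (mul_eq_zero.1 ?_).resolve_left (sub_ne_zero.2 hvw)
    linear_combination huv' - huw'
  exact ⟨by linear_combination hsum, by linear_combination hu - u * huv' + u * v * hsum⟩

lemma norm_sub_lt_norm_one_sub_conj_mul {a₁ a₂ : ℂ} (ha₁ : ‖a₁‖ < 1) (ha₂ : ‖a₂‖ < 1) :
    ‖a₁ - a₂‖ < ‖1 - conj a₁ * a₂‖ := by
  have key : normSq (1 - conj a₁ * a₂) - normSq (a₁ - a₂) =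
      (1 - normSq a₁) * (1 - normSq a₂) := by
    simp only [normSq_apply, sub_re, sub_im, mul_re, mul_im, conj_re, conj_im, one_re, one_im]
    ring
  have hsq : ∀ a : ℂ, ‖a‖ < 1 → normSq a < 1 := fun a ha => by
    rw [← Complex.sq_norm]; exact pow_lt_one₀ (norm_nonneg a) ha two_ne_zero
  rw [← sq_lt_sq₀ (norm_nonneg _) (norm_nonneg _), Complex.sq_norm, Complex.sq_norm]
  nlinarith [mul_pos (sub_pos.2 (hsq a₁ ha₁)) (sub_pos.2 (hsq a₂ ha₂))]

lemma norm_one_sub_conj_mul_of_norm_eq_one (a : ℂ) {w : ℂ} (hw : ‖w‖ = 1) :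
    ‖1 - conj a * w‖ = ‖w - a‖ := by
  have h : 1 - conj a * w = w * conj (w - a) := by
    rw [map_sub, mul_sub, mul_conj', hw]; push_cast; ring
  rw [h, norm_mul, norm_conj, hw, one_mul]

lemma one_sub_conj_mul_ne_zero {a w : ℂ} (ha : ‖a‖ < 1) (hw : ‖w‖ = 1) :
    1 - conj a * w ≠ 0 := by
  rw [← norm_ne_zero_iff, norm_one_sub_conj_mul_of_norm_eq_one a hw, norm_ne_zero_iff,
    sub_ne_zero]
  rintro rfl
  linarith

lemma lineReflection_eq_of_norm_eq_one {u v : ℂ} (huv : u ≠ v) (hu : ‖u‖ = 1) (hv : ‖v‖ = 1)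
    (z : ℂ) : lineReflection u v z = u + v - u * v * conj z := by
  have hu₀ : u ≠ 0 := norm_ne_zero_iff.1 (by rw [hu]; exact one_ne_zero)
  have hv₀ : v ≠ 0 := norm_ne_zero_iff.1 (by rw [hv]; exact one_ne_zero)
  simp only [lineReflection, map_sub, ← inv_eq_conj hu, ← inv_eq_conj hv]
  field_simp [sub_ne_zero.2 huv, sub_ne_zero.2 huv.symm]
  ring

section Blaschke

variable {a₁ a₂ lam : ℂ}

lemma cubic_of_blaschke_eq (ha₁ : ‖a₁‖ < 1) (ha₂ : ‖a₂‖ < 1) {w : ℂ} (hw : ‖w‖ = 1)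
    (h : w * ((w - a₁) / (1 - conj a₁ * w)) * ((w - a₂) / (1 - conj a₂ * w)) = lam) :
    w * (w - a₁) * (w - a₂) = lam * ((1 - conj a₁ * w) * (1 - conj a₂ * w)) := by
  have h₁ := one_sub_conj_mul_ne_zero ha₁ hw
  have h₂ := one_sub_conj_mul_ne_zero ha₂ hw
  calc w * (w - a₁) * (w - a₂)
      = w * ((w - a₁) / (1 - conj a₁ * w) * (1 - conj a₁ * w)) *
          ((w - a₂) / (1 - conj a₂ * w) * (1 - conj a₂ * w)) := by
        rw [div_mul_cancel₀ _ h₁, div_mul_cancel₀ _ h₂]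
    _ = lam * ((1 - conj a₁ * w) * (1 - conj a₂ * w)) := by rw [← h]; ring

lemma norm_lineReflection_sub_of_cubic_roots (ha₁ : ‖a₁‖ < 1) {u v w : ℂ}
    (huv : u ≠ v) (huw : u ≠ w) (hvw : v ≠ w) (hu : ‖u‖ = 1) (hv : ‖v‖ = 1) (hw : ‖w‖ = 1)
    (hcu : u * (u - a₁) * (u - a₂) = lam * ((1 - conj a₁ * u) * (1 - conj a₂ * u)))
    (hcv : v * (v - a₁) * (v - a₂) = lam * ((1 - conj a₁ * v) * (1 - conj a₂ * v)))
    (hcw : w * (w - a₁) * (w - a₂) = lam * ((1 - conj a₁ * w) * (1 - conj a₂ * w))) :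
    ‖lineReflection u v a₁ - a₂‖ = ‖1 - conj a₁ * a₂‖ := by
  obtain ⟨hsum, hprod⟩ := vieta_of_cubic (c₂ := a₁ + a₂ + lam * conj a₁ * conj a₂)
    (c₁ := a₁ * a₂ + lam * (conj a₁ + conj a₂)) (c₀ := lam) huv huw hvw
    (by linear_combination hcu) (by linear_combination hcv) (by linear_combination hcw)
  have hw₀ : w ≠ 0 := norm_ne_zero_iff.1 (by rw [hw]; exact one_ne_zero)
  have key : (u + v - u * v * conj a₁ - a₂) * (1 - conj a₁ * w) =
      (a₁ - w) * (1 - conj a₁ * a₂) := by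
    refine mul_left_cancel₀ hw₀ ?_
    linear_combination w * (1 - conj a₁ * w) * hsum - conj a₁ * (1 - conj a₁ * w) * hprod
      + conj a₁ * hcw
  have hwa : ‖w - a₁‖ ≠ 0 := by
    rw [norm_ne_zero_iff, sub_ne_zero]
    rintro rfl
    linarith
  have hnorm := congrArg norm key
  rw [norm_mul, norm_mul, norm_one_sub_conj_mul_of_norm_eq_one a₁ hw, norm_sub_rev a₁ w] at hnorm
  rw [lineReflection_eq_of_norm_eq_one huv hu hv]
  exact mul_right_cancel₀ hwa (by rw [hnorm, mul_comm])

end Blaschke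

theorem daepp_gorkin_mortini_general (a₁ a₂ : ℂ)
    (ha₁ : ‖a₁‖ < 1) (ha₂ : ‖a₂‖ < 1)
    (B : ℂ → ℂ)
    (hB : ∀ z : ℂ, B z = z * ((z - a₁) / (1 - conj a₁ * z)) *
      ((z - a₂) / (1 - conj a₂ * z)))
    (lam : ℂ)
    (w₁ w₂ w₃ : ℂ) (h12 : w₁ ≠ w₂) (h23 : w₂ ≠ w₃) (h13 : w₁ ≠ w₃)
    (hw : ∀ w ∈ ({w₁, w₂, w₃} : Set ℂ), ‖w‖ = 1 ∧ B w = lam) :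
    ∀ v v' : ℂ, v ∈ ({w₁, w₂, w₃} : Set ℂ) → v' ∈ ({w₁, w₂, w₃} : Set ℂ) →
      v ≠ v' →
      (∃! p : ℂ, (∃ s : ℝ, p = v + s • (v' - v)) ∧
        ‖p - a₁‖ + ‖p - a₂‖ = ‖1 - conj a₁ * a₂‖) ∧
      (∀ p : ℂ, (∃ s : ℝ, p = v + s • (v' - v)) →
        ‖1 - conj a₁ * a₂‖ ≤ ‖p - a₁‖ + ‖p - a₂‖) := by
  have hroot : ∀ w ∈ ({w₁, w₂, w₃} : Set ℂ), ‖w‖ = 1 ∧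
      w * (w - a₁) * (w - a₂) = lam * ((1 - conj a₁ * w) * (1 - conj a₂ * w)) := by
    intro w hw'
    obtain ⟨hnorm, hBw⟩ := hw w hw'
    exact ⟨hnorm, cubic_of_blaschke_eq ha₁ ha₂ hnorm (hB w ▸ hBw)⟩
  intro v v' hv hv' hvv'
  obtain ⟨w, hw', hwv, hwv'⟩ := exists_mem_ne_ne_of_triple h12 h23 h13 v v'
  obtain ⟨hvn, hvc⟩ := hroot v hv
  obtain ⟨hv'n, hv'c⟩ := hroot v' hv'
  obtain ⟨hwn, hwc⟩ := hroot w hw'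
  exact lineTangentToEllipse_of_norm_lineReflection_sub hvv'
    (norm_lineReflection_sub_of_cubic_roots ha₁ hvv' hwv.symm hwv'.symm hvn hv'n hwn hvc hv'c hwc)
    (norm_sub_lt_norm_one_sub_conj_mul ha₁ ha₂)

/-- Daepp–Gorkin–Mortini: for a canonical Blaschke product of degree 3 with
zeros `0, a₁, a₂`, the lines joining the three preimages of any `λ ∈ ∂𝔻` are
tangent to the ellipse `|w - a₁| + |w - a₂| = |1 - conj a₁ * a₂|`. -/
theorem daepp_gorkin_mortini (a₁ a₂ : ℂ)
    (ha₁ : ‖a₁‖ < 1) (ha₂ : ‖a₂‖ < 1)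
    (B : ℂ → ℂ)
    (hB : ∀ z : ℂ, B z = z * ((z - a₁) / (1 - conj a₁ * z)) *
      ((z - a₂) / (1 - conj a₂ * z)))
    (lam : ℂ) (hlam : ‖lam‖ = 1)
    (w₁ w₂ w₃ : ℂ) (h12 : w₁ ≠ w₂) (h23 : w₂ ≠ w₃) (h13 : w₁ ≠ w₃)
    (hw : ∀ w ∈ ({w₁, w₂, w₃} : Set ℂ), ‖w‖ = 1 ∧ B w = lam) :
    ∀ v v' : ℂ, v ∈ ({w₁, w₂, w₃} : Set ℂ) → v' ∈ ({w₁, w₂, w₃} : Set ℂ) →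
      v ≠ v' →
      (∃! p : ℂ, (∃ s : ℝ, p = v + s • (v' - v)) ∧
        ‖p - a₁‖ + ‖p - a₂‖ = ‖1 - conj a₁ * a₂‖) ∧
      (∀ p : ℂ, (∃ s : ℝ, p = v + s • (v' - v)) →
        ‖1 - conj a₁ * a₂‖ ≤ ‖p - a₁‖ + ‖p - a₂‖) :=
  daepp_gorkin_mortini_general a₁ a₂ ha₁ ha₂ B hB lam w₁ w₂ w₃ h12 h23 h13 hw
end

section
/- Let f₁ ≠ f₂ ∈ ℂ and r > |f₁ - f₂|, and suppose the ellipse {z : |z - f₁| + |z - f₂| = r} coincides with the zero set of conj(u) z² + p z conj(z) + u conj(z)² + conj(v) z + v conj(z) + q where p, q ∈ ℝ, u, v ∈ ℂ, p² - 4|u|² > 0. Then f₁ and f₂ are the two solutions of the quadratic (4 u conj(u) - p²) ζ² + (4 u conj(v) - 2 p v) ζ + 4 q u - v² = 0. -/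
/-!
Let `P` be the conic form. The ellipse is symmetric about the midpoint `c` of its foci, so `P`
has no linear part around `c`: its `∂/∂z` vanishes there, which expresses `v` through `u`, `p`
and `c`. In the frame `z = c + (x + y i) e`, with `e` the unit vector along the major axis, the
remaining quadratic form must vanish at the vertices `(±a, 0)`, `(0, ±b)` and at `(3a/5, 4b/5)`.
This forces `α = conj u * e ^ 2` to be real, with `2 α (a² + b²) = -p d²` and
`P(c) = -(2α + p) a²`, where `d` is the focal half-distance. With `v` eliminated, the quadratic of
the statement becomes `(4|u|² - p²) (ζ - c)² + 4 u P(c)`, and these relations make it vanish at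
`ζ = c ± d e`.
-/

open Complex ComplexConjugate

section GeneralConic

variable (p q : ℝ) (u v : ℂ)

def conicForm (z : ℂ) : ℂ :=
  conj u * z ^ 2 + (p : ℂ) * z * conj z + u * (conj z) ^ 2 + conj v * z + v * conj z + (q : ℂ)

def fociQuadratic (ζ : ℂ) : ℂ :=
  (4 * u * conj u - (p : ℂ) ^ 2) * ζ ^ 2 + (4 * u * conj v - 2 * (p : ℂ) * v) * ζ +
    4 * (q : ℂ) * u - v ^ 2

/-- The Wirtinger derivative `∂/∂z` of `conicForm` at `c`. -/
def conicDeriv (c : ℂ) : ℂ := 2 * conj u * c + (p : ℂ) * conj c + conj v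

theorem conicForm_add_sub_conicForm_sub (c s : ℂ) :
    conicForm p q u v (c + s) - conicForm p q u v (c - s) =
      2 * (conicDeriv p u v c * s + conj (conicDeriv p u v c * s)) := by
  simp only [conicForm, conicDeriv, map_add, map_sub, map_mul, conj_conj, conj_ofReal, map_ofNat]
  ring

theorem conj_conicDeriv (c : ℂ) :
    conj (conicDeriv p u v c) = 2 * u * conj c + (p : ℂ) * c + v := by
  simp only [conicDeriv, map_add, map_mul, conj_conj, conj_ofReal, map_ofNat]

variable {p u v}

theorem conicForm_add_of_conicDeriv_eq_zero {c : ℂ} (hc : conicDeriv p u v c = 0) (s : ℂ) :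
    conicForm p q u v (c + s) =
      conicForm p q u v c + (conj u * s ^ 2 + p * s * conj s + u * conj s ^ 2) := by
  have hc' : 2 * u * conj c + p * c + v = 0 := by rw [← conj_conicDeriv, hc, map_zero]
  unfold conicDeriv at hc
  simp only [conicForm, map_add]
  linear_combination s * hc + conj s * hc'

theorem fociQuadratic_add_of_conicDeriv_eq_zero {c : ℂ} (hc : conicDeriv p u v c = 0) (s : ℂ) :
    fociQuadratic p q u v (c + s) =
      (4 * u * conj u - p ^ 2) * s ^ 2 + 4 * u * conicForm p q u v c := by
  have hc' : 2 * u * conj c + p * c + v = 0 := by rw [← conj_conicDeriv, hc, map_zero]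
  unfold conicDeriv at hc
  have hv' : conj v = -(2 * conj u * c + p * conj c) := by linear_combination hc
  have hv : v = -(2 * u * conj c + p * c) := by linear_combination hc'
  simp only [fociQuadratic, conicForm]
  rw [hv', hv]
  ring

variable {q}

theorem conicDeriv_eq_zero_of_symmetric {c e : ℂ} (he : e ≠ 0) {a b : ℝ} (ha : a ≠ 0)
    (hb : b ≠ 0) (h₁ : conicForm p q u v (c + a * e) = 0) (h₂ : conicForm p q u v (c - a * e) = 0)
    (h₃ : conicForm p q u v (c + b * I * e) = 0) (h₄ : conicForm p q u v (c - b * I * e) = 0) :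
    conicDeriv p u v c = 0 := by
  set L := conicDeriv p u v c
  have hre : (a : ℂ) * (L * e + conj L * conj e) = 0 := by
    have h := conicForm_add_sub_conicForm_sub p q u v c (a * e)
    simp only [h₁, h₂, map_mul, conj_ofReal] at h
    linear_combination -h / 2
  have him : (b * I : ℂ) * (L * e - conj L * conj e) = 0 := by
    have h := conicForm_add_sub_conicForm_sub p q u v c (b * I * e)
    simp only [h₃, h₄, map_mul, conj_ofReal, conj_I] at h
    linear_combination -h / 2
  have hsum := (mul_eq_zero.mp hre).resolve_left (ofReal_ne_zero.mpr ha)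
  have hdiff := (mul_eq_zero.mp him).resolve_left (mul_ne_zero (ofReal_ne_zero.mpr hb) I_ne_zero)
  have hLe : L * e = 0 := by linear_combination (hsum + hdiff) / 2
  exact (mul_eq_zero.mp hLe).resolve_right he

theorem fociQuadratic_eq_zero_of_conicDeriv_eq_zero {c e : ℂ} (he : e * conj e = 1) {a b d : ℝ}
    (ha : a ≠ 0) (hb : b ≠ 0) (habd : a ^ 2 = b ^ 2 + d ^ 2) (hc : conicDeriv p u v c = 0)
    (h₁ : conicForm p q u v (c + a * e) = 0) (h₂ : conicForm p q u v (c + b * I * e) = 0)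
    (h₃ : conicForm p q u v (c + (3 * a + 4 * b * I) / 5 * e) = 0) :
    fociQuadratic p q u v (c + d * e) = 0 := by
  rw [fociQuadratic_add_of_conicDeriv_eq_zero q hc]
  simp only [conicForm_add_of_conicDeriv_eq_zero q hc, map_add, map_mul, map_div₀, conj_ofReal,
    conj_I, map_ofNat] at h₁ h₂ h₃
  set P := conicForm p q u v c
  have hα : conj u * e ^ 2 = u * conj e ^ 2 := by
    have h : (24 * a * b * I / 25 : ℂ) * (conj u * e ^ 2 - u * conj e ^ 2) = 0 := by
      linear_combination h₃ - 9 / 25 * h₁ - 16 / 25 * h₂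
    have hne : (24 * a * b * I / 25 : ℂ) ≠ 0 := by simp [ha, hb]
    exact sub_eq_zero.mp ((mul_eq_zero.mp h).resolve_left hne)
  set α := conj u * e ^ 2
  have E₁ : P + 2 * a ^ 2 * α + p * a ^ 2 = 0 := by
    linear_combination h₁ + a ^ 2 * hα - p * a ^ 2 * he
  have E₂ : P - 2 * b ^ 2 * α + p * b ^ 2 = 0 := by
    linear_combination h₂ - b ^ 2 * hα - p * b ^ 2 * he +
      b ^ 2 * (p * e * conj e - conj u * e ^ 2 - u * conj e ^ 2) * I_sq
  have hu : u = α * e ^ 2 := by linear_combination - u * (e * conj e + 1) * he - e ^ 2 * hα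
  have habd' : (a : ℂ) ^ 2 = b ^ 2 + d ^ 2 := by exact_mod_cast habd
  linear_combination e ^ 2 * (4 * α * E₁ - (2 * α + p) * (E₁ - E₂) + (p ^ 2 - 4 * α ^ 2) * habd')
    + (4 * conj u * d ^ 2 * e ^ 2 + 4 * P) * hu

end GeneralConic

def ellipsePoint (c e : ℂ) (a b X Y : ℝ) : ℂ := c + (a * X + b * Y * I) * e

theorem norm_ellipsePoint_sub_focus {a b d X Y : ℝ} (habd : a ^ 2 = b ^ 2 + d ^ 2)
    (hXY : X ^ 2 + Y ^ 2 = 1) (hdX : 0 ≤ a - d * X) (c : ℂ) {e : ℂ} (he : ‖e‖ = 1) :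
    ‖ellipsePoint c e a b X Y - (c + d * e)‖ = a - d * X := by
  have hz : ellipsePoint c e a b X Y - (c + d * e) = (↑(a * X - d) + ↑(b * Y) * I) * e := by
    unfold ellipsePoint; push_cast; ring
  have hsq : (a * X - d) ^ 2 + (b * Y) ^ 2 = (a - d * X) ^ 2 := by
    linear_combination (a ^ 2 - d ^ 2) * hXY - Y ^ 2 * habd
  rw [hz, norm_mul, he, mul_one, norm_add_mul_I, hsq, Real.sqrt_sq hdX]

theorem norm_ellipsePoint_sub_add_norm_ellipsePoint_sub {a b d X Y : ℝ}
    (habd : a ^ 2 = b ^ 2 + d ^ 2) (hda : |d| ≤ a) (hXY : X ^ 2 + Y ^ 2 = 1) (c : ℂ) {e : ℂ}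
    (he : ‖e‖ = 1) :
    ‖ellipsePoint c e a b X Y - (c - d * e)‖ + ‖ellipsePoint c e a b X Y - (c + d * e)‖ =
      2 * a := by
  have hX : |X| ≤ 1 := abs_le_one_iff_mul_self_le_one.mpr (by nlinarith)
  obtain ⟨hdX₁, hdX₂⟩ : -a ≤ d * X ∧ d * X ≤ a :=
    abs_le.mp ((abs_mul d X).trans_le ((mul_le_of_le_one_right (abs_nonneg d) hX).trans hda))
  have hneg : c - d * e = c + ↑(-d) * e := by push_cast; ring
  rw [hneg, norm_ellipsePoint_sub_focus (by rwa [neg_sq]) hXY (by linarith) c he,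
    norm_ellipsePoint_sub_focus habd hXY (by linarith) c he]
  ring

theorem fociQuadratic_eq_zero_of_conicForm_ellipsePoint {p q : ℝ} {u v c e : ℂ} (he : ‖e‖ = 1)
    {a b d : ℝ} (ha : a ≠ 0) (hb : b ≠ 0) (habd : a ^ 2 = b ^ 2 + d ^ 2)
    (hP : ∀ X Y : ℝ, X ^ 2 + Y ^ 2 = 1 → conicForm p q u v (ellipsePoint c e a b X Y) = 0) :
    fociQuadratic p q u v (c + d * e) = 0 := by
  have hP' {X Y : ℝ} {z : ℂ} (hXY : X ^ 2 + Y ^ 2 = 1) (hz : ellipsePoint c e a b X Y = z) :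
      conicForm p q u v z = 0 := hz ▸ hP X Y hXY
  have he' : e * conj e = 1 := by rw [mul_conj, normSq_eq_norm_sq, he]; norm_num
  have hc : conicDeriv p u v c = 0 :=
    conicDeriv_eq_zero_of_symmetric (left_ne_zero_of_mul_eq_one he') ha hb
      (hP' (X := 1) (Y := 0) (by norm_num) (by rw [ellipsePoint]; push_cast; ring))
      (hP' (X := -1) (Y := 0) (by norm_num) (by rw [ellipsePoint]; push_cast; ring))
      (hP' (X := 0) (Y := 1) (by norm_num) (by rw [ellipsePoint]; push_cast; ring))
      (hP' (X := 0) (Y := -1) (by norm_num) (by rw [ellipsePoint]; push_cast; ring))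
  -- `(3/5, 4/5)` is a rational point off the axes, needed to detect the `x y` coefficient.
  exact fociQuadratic_eq_zero_of_conicDeriv_eq_zero he' ha hb habd hc
    (hP' (X := 1) (Y := 0) (by norm_num) (by rw [ellipsePoint]; push_cast; ring))
    (hP' (X := 0) (Y := 1) (by norm_num) (by rw [ellipsePoint]; push_cast; ring))
    (hP' (X := 3 / 5) (Y := 4 / 5) (by norm_num) (by rw [ellipsePoint]; push_cast; ring))

theorem exists_center_axis_of_foci (f₁ f₂ : ℂ) :
    ∃ (c e : ℂ) (d : ℝ), ‖e‖ = 1 ∧ 2 * d = ‖f₁ - f₂‖ ∧ f₁ = c - d * e ∧ f₂ = c + d * e := by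
  have h := norm_mul_exp_arg_mul_I (f₂ - f₁)
  rw [← norm_neg, neg_sub] at h
  refine ⟨(f₁ + f₂) / 2, exp (arg (f₂ - f₁) * I), ‖f₁ - f₂‖ / 2, norm_exp_ofReal_mul_I _,
    by ring, ?_, ?_⟩ <;> push_cast
  · linear_combination h / 2
  · linear_combination -h / 2

theorem foci_of_general_form_general (f₁ f₂ : ℂ) (r : ℝ)
    (hr : ‖f₁ - f₂‖ < r) (p q : ℝ) (u v : ℂ)
    (hset : {z : ℂ | ‖z - f₁‖ + ‖z - f₂‖ = r} =
      {z : ℂ | conj u * z ^ 2 + (p : ℂ) * z * conj z + u * (conj z) ^ 2 +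
        conj v * z + v * conj z + (q : ℂ) = 0}) :
    ∀ ζ ∈ ({f₁, f₂} : Set ℂ),
      (4 * u * conj u - (p : ℂ) ^ 2) * ζ ^ 2 +
        (4 * u * conj v - 2 * (p : ℂ) * v) * ζ + 4 * (q : ℂ) * u - v ^ 2 = 0 := by
  obtain ⟨c, e, d, he, hfd, hf₁, hf₂⟩ := exists_center_axis_of_foci f₁ f₂
  have hda : |d| < r / 2 := by
    rw [abs_of_nonneg (by linarith [norm_nonneg (f₁ - f₂)])]; linarith
  have hdr : d ^ 2 < (r / 2) ^ 2 := by nlinarith [sq_abs d, abs_nonneg d]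
  set b := √((r / 2) ^ 2 - d ^ 2)
  have hb : 0 < b := Real.sqrt_pos.mpr (by linarith)
  have habd : (r / 2) ^ 2 = b ^ 2 + d ^ 2 := by rw [Real.sq_sqrt (by linarith)]; ring
  have hP (X Y : ℝ) (hXY : X ^ 2 + Y ^ 2 = 1) :
      conicForm p q u v (ellipsePoint c e (r / 2) b X Y) = 0 := by
    refine (Set.ext_iff.mp hset _).mp ?_
    have h := norm_ellipsePoint_sub_add_norm_ellipsePoint_sub habd hda.le hXY c he
    rw [← hf₁, ← hf₂] at h
    exact h.trans (by ring)
  have hfoc (d' : ℝ) (hd' : d' ^ 2 = d ^ 2) : fociQuadratic p q u v (c + d' * e) = 0 :=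
    fociQuadratic_eq_zero_of_conicForm_ellipsePoint he (by linarith [abs_nonneg d]) hb.ne'
      (hd' ▸ habd) hP
  rintro ζ (rfl | rfl)
  · have h := hfoc (-d) (neg_sq d)
    rwa [ofReal_neg, neg_mul, ← sub_eq_add_neg, ← hf₁] at h
  · exact hf₂ ▸ hfoc d rfl

/-- If the ellipse `|z - f₁| + |z - f₂| = r` coincides with the zero set of the
general conic form, then the foci are the solutions of the stated quadratic. -/
theorem foci_of_general_form (f₁ f₂ : ℂ) (r : ℝ) (hne : f₁ ≠ f₂)
    (hr : ‖f₁ - f₂‖ < r) (p q : ℝ) (u v : ℂ)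
    (hell : p ^ 2 - 4 * ‖u‖ ^ 2 > 0)
    (hset : {z : ℂ | ‖z - f₁‖ + ‖z - f₂‖ = r} =
      {z : ℂ | conj u * z ^ 2 + (p : ℂ) * z * conj z + u * (conj z) ^ 2 +
        conj v * z + v * conj z + (q : ℂ) = 0}) :
    ∀ ζ ∈ ({f₁, f₂} : Set ℂ),
      (4 * u * conj u - (p : ℂ) ^ 2) * ζ ^ 2 +
        (4 * u * conj v - 2 * (p : ℂ) * v) * ζ + 4 * (q : ℂ) * u - v ^ 2 = 0 :=
  foci_of_general_form_general f₁ f₂ r hr p q u v hset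
end

section
/- Let B(w) = w ∏_{k=1}^{d-1} (w - a_k)/(1 - conj(a_k) w) be a canonical Blaschke product of degree d with a_k ∈ 𝔻. For λ on the unit circle, let w₁, …, w_d be the d preimages of λ under B on the unit circle, and let ζ = (w₁ + ⋯ + w_d)/d be their centroid. Then |ζ - (a₁ + ⋯ + a_{d-1})/d| = |a₁ ⋯ a_{d-1}|/d. -/
open Complex ComplexConjugate Polynomial Finset

/-! Clearing denominators, each preimage of `λ` is a root of the monic polynomial
`z ∏ (z - aₖ) - λ ∏ (1 - conj aₖ z)` of degree `d`; having `d` distinct roots, it factors as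
`∏ (z - wᵢ)`. Comparing the coefficients of `z^(d-1)` (Vieta) gives
`∑ wᵢ = ∑ aₖ + λ ∏ (-conj aₖ)`, and `|λ| = 1`. -/

namespace Polynomial

variable {R : Type*}

theorem Monic.eq_prod_X_sub_C_of_isRoot [CommRing R] [IsDomain R] {ι : Type*} [Fintype ι]
    {p : R[X]} (hp : p.Monic) (hdeg : p.natDegree = Fintype.card ι) {w : ι → R}
    (hw : Function.Injective w) (hroot : ∀ i, p.IsRoot (w i)) :
    p = ∏ i, (X - C (w i)) := by
  have hprod : (∏ i, (X - C (w i))).Monic := monic_prod_of_monic _ _ fun _ _ => monic_X_sub_C _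
  have hdeg' : (∏ i, (X - C (w i))).natDegree = Fintype.card ι :=
    natDegree_finsetProd_X_sub_C_eq_card _ _
  refine eq_of_degree_le_of_eval_index_eq (s := univ) hw.injOn ?_ ?_ ?_ fun i _ => ?_
  · rw [degree_eq_natDegree hp.ne_zero, hdeg, card_univ]
  · rw [degree_eq_natDegree hp.ne_zero, degree_eq_natDegree hprod.ne_zero, hdeg, hdeg']
  · rw [hp.leadingCoeff, hprod.leadingCoeff]
  · rw [(hroot i).eq_zero, eval_prod, prod_eq_zero (mem_univ i) (by simp)]

variable [CommRing R] {ι : Type*} (s : Finset ι) (b : ι → R)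

theorem natDegree_one_sub_C_mul_X_le (c : R) : (1 - C c * X).natDegree ≤ 1 := by
  compute_degree

theorem natDegree_prod_one_sub_C_mul_X_le : (∏ i ∈ s, (1 - C (b i) * X)).natDegree ≤ #s := by
  refine (natDegree_prod_le _ _).trans ?_
  simpa using sum_le_sum fun i (_ : i ∈ s) => natDegree_one_sub_C_mul_X_le (b i)

theorem coeff_prod_one_sub_C_mul_X_card :
    (∏ i ∈ s, (1 - C (b i) * X)).coeff #s = ∏ i ∈ s, -b i := by
  simpa [coeff_one] using
    coeff_prod_of_natDegree_le (s := s) _ 1 fun i _ => natDegree_one_sub_C_mul_X_le (b i)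

theorem monic_X_mul_prod_X_sub_C : (X * ∏ i ∈ s, (X - C (b i))).Monic :=
  monic_X.mul (monic_prod_of_monic _ _ fun _ _ => monic_X_sub_C _)

theorem natDegree_X_mul_prod_X_sub_C [Nontrivial R] :
    (X * ∏ i ∈ s, (X - C (b i))).natDegree = #s + 1 := by
  rw [monic_X.natDegree_mul (monic_prod_of_monic _ _ fun _ _ => monic_X_sub_C _), natDegree_X,
    natDegree_finsetProd_X_sub_C_eq_card, add_comm]

theorem coeff_X_mul_prod_X_sub_C_card [Nontrivial R] :
    (X * ∏ i ∈ s, (X - C (b i))).coeff #s = -∑ i ∈ s, b i := by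
  rw [← Nat.add_sub_cancel #s 1, ← natDegree_X_mul_prod_X_sub_C s b,
    ← nextCoeff_of_natDegree_pos (by simp [natDegree_X_mul_prod_X_sub_C]),
    monic_X.nextCoeff_mul (monic_prod_of_monic _ _ fun _ _ => monic_X_sub_C _),
    prod_X_sub_C_nextCoeff]
  simp [nextCoeff]

theorem natDegree_C_mul_prod_one_sub_C_mul_X_lt [Nontrivial R] (a : ι → R) (c : R) :
    (C c * ∏ i ∈ s, (1 - C (b i) * X)).natDegree <
      (X * ∏ i ∈ s, (X - C (a i))).natDegree := by
  rw [natDegree_X_mul_prod_X_sub_C, Nat.lt_succ_iff]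
  exact (natDegree_C_mul_le _ _).trans (natDegree_prod_one_sub_C_mul_X_le s b)

end Polynomial

section Blaschke

variable {K : Type*} [Field K] {n : ℕ} (a b : Fin n → K) (lam : K)

noncomputable def blaschkeLevelPoly : K[X] :=
  X * ∏ k, (X - C (a k)) - C lam * ∏ k, (1 - C (b k) * X)

theorem monic_blaschkeLevelPoly : (blaschkeLevelPoly a b lam).Monic :=
  (monic_X_mul_prod_X_sub_C _ _).sub_of_left
    (degree_lt_degree (natDegree_C_mul_prod_one_sub_C_mul_X_lt univ b a lam))

theorem natDegree_blaschkeLevelPoly : (blaschkeLevelPoly a b lam).natDegree = n + 1 := by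
  rw [blaschkeLevelPoly, natDegree_sub_eq_left_of_natDegree_lt
    (natDegree_C_mul_prod_one_sub_C_mul_X_lt univ b a lam), natDegree_X_mul_prod_X_sub_C, card_fin]

theorem coeff_blaschkeLevelPoly :
    (blaschkeLevelPoly a b lam).coeff n = -∑ k, a k - lam * ∏ k, -b k := by
  simpa [blaschkeLevelPoly] using congr($(coeff_X_mul_prod_X_sub_C_card univ a) -
    lam * $(coeff_prod_one_sub_C_mul_X_card univ b))

variable {a b lam}

theorem isRoot_blaschkeLevelPoly (hlam : lam ≠ 0) {z : K}
    (hz : z * ∏ k, (z - a k) / (1 - b k * z) = lam) : (blaschkeLevelPoly a b lam).IsRoot z := by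
  have hden : ∏ k, (1 - b k * z) ≠ 0 := by
    rintro h
    rw [prod_div_distrib, h, div_zero, mul_zero] at hz
    exact hlam hz.symm
  rw [prod_div_distrib, ← mul_div_assoc, div_eq_iff hden] at hz
  simp [blaschkeLevelPoly, eval_prod, hz]

theorem sum_eq_of_blaschke_eq (hlam : lam ≠ 0) {w : Fin (n + 1) → K}
    (hinj : Function.Injective w) (hw : ∀ i, w i * ∏ k, (w i - a k) / (1 - b k * w i) = lam) :
    ∑ i, w i = ∑ k, a k + lam * ∏ k, -b k := by
  have hfactor := (monic_blaschkeLevelPoly a b lam).eq_prod_X_sub_C_of_isRoot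
    (by simp [natDegree_blaschkeLevelPoly]) hinj fun i => isRoot_blaschkeLevelPoly hlam (hw i)
  have hcoeff := congr(coeff $hfactor n)
  have hvieta := prod_X_sub_C_coeff_card_pred univ w (by simp)
  rw [card_univ, Fintype.card_fin, Nat.add_sub_cancel] at hvieta
  rw [coeff_blaschkeLevelPoly, hvieta] at hcoeff
  linear_combination hcoeff

end Blaschke

theorem centroid_circle_general (n : ℕ) (a : Fin n → ℂ)
    (lam : ℂ) (hlam : ‖lam‖ = 1) (w : Fin (n + 1) → ℂ)
    (hinj : Function.Injective w)
    (hw : ∀ i, ‖w i‖ = 1 ∧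
      w i * ∏ k, (w i - a k) / (1 - conj (a k) * w i) = lam) :
    ‖(∑ i, w i) / (n + 1) - (∑ k, a k) / (n + 1)‖ =
      ‖∏ k, a k‖ / (n + 1) := by
  have hlam₀ : lam ≠ 0 := norm_ne_zero_iff.mp (by simp [hlam])
  have hsum := sum_eq_of_blaschke_eq (b := fun k => conj (a k)) hlam₀ hinj fun i => (hw i).2
  have hd : ‖(n : ℂ) + 1‖ = n + 1 := by exact_mod_cast Complex.norm_natCast (n + 1)
  simp only [div_sub_div_same, hsum, add_sub_cancel_left, norm_div, norm_mul, hlam, one_mul,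
    norm_prod, norm_neg, Complex.norm_conj, hd]

/-- The centroid of the `d` preimages of `λ ∈ ∂𝔻` under a canonical Blaschke
product of degree `d = n + 1` with zeros `0, a₁, …, aₙ` lies on the circle with
center `(a₁ + ⋯ + aₙ)/d` and radius `|a₁ ⋯ aₙ|/d`. -/
theorem centroid_circle (n : ℕ) (a : Fin n → ℂ) (ha : ∀ k, ‖a k‖ < 1)
    (lam : ℂ) (hlam : ‖lam‖ = 1) (w : Fin (n + 1) → ℂ)
    (hinj : Function.Injective w)
    (hw : ∀ i, ‖w i‖ = 1 ∧
      w i * ∏ k, (w i - a k) / (1 - conj (a k) * w i) = lam) :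
    ‖(∑ i, w i) / (n + 1) - (∑ k, a k) / (n + 1)‖ =
      ‖∏ k, a k‖ / (n + 1) :=
  centroid_circle_general n a lam hlam w hinj hw
end

section
/- Let 0 < t < 1 and let ω₁ ≠ ω₂ be points on the unit circle with ω₁ + ω₂ ≠ 0. The tangent lines to the ellipse E_t (defined by t²z² - (1+t⁴)z conj(z) + t² conj(z)² + (1-t²)² = 0) at the points ζ_k = φ_t(ω_k) = (t²ω_k + conj(ω_k))/(1+t²), k = 1,2, intersect at the point z = 2(ω₁ω₂t² + 1)/((t²+1)(ω₁+ω₂)). Moreover, writing w₀ = 2ω₁ω₂/(ω₁+ω₂) for the intersection of the corresponding tangents to the unit circle, this equals z = (t² w₀ + conj(w₀))/(1+t²). -/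
/-!
The tangent equations are linear in `z` and `conj z`, so two non-parallel tangents meet in
exactly one point. On the unit circle `conj ω = ω⁻¹`, which turns the conjugate of the candidate
point into an explicit rational expression in `ω₁, ω₂`; checking the tangent equations and the
identity with `φ_t(w₀)` is then polynomial algebra.
-/

open Complex ComplexConjugate

/-- The tangent to the ellipse `E_t` at `φ_t(ω)`, for `ω` on the unit circle. -/
def ellipseTangent (t : ℝ) (ω : ℂ) : Set ℂ :=
  {z | (ω ^ 2 - (t : ℂ) ^ 2) * z - ((t : ℂ) ^ 2 * ω ^ 2 - 1) * conj z +
    2 * ((t : ℂ) ^ 2 - 1) * ω = 0}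

/-- `φ_t`, which maps the unit circle onto `E_t`. -/
noncomputable def ellipseMap (t : ℝ) (w : ℂ) : ℂ :=
  ((t : ℂ) ^ 2 * w + conj w) / (1 + (t : ℂ) ^ 2)

/-- `w₀`. -/
noncomputable def circleTangentIntersection (ω₁ ω₂ : ℂ) : ℂ :=
  2 * ω₁ * ω₂ / (ω₁ + ω₂)

noncomputable def ellipseTangentIntersection (t : ℝ) (ω₁ ω₂ : ℂ) : ℂ :=
  2 * (ω₁ * ω₂ * (t : ℂ) ^ 2 + 1) / (((t : ℂ) ^ 2 + 1) * (ω₁ + ω₂))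

lemma ellipseTangentIntersection_comm (t : ℝ) (ω₁ ω₂ : ℂ) :
    ellipseTangentIntersection t ω₁ ω₂ = ellipseTangentIntersection t ω₂ ω₁ := by
  unfold ellipseTangentIntersection
  ring

lemma ofReal_sq_add_one_ne_zero (t : ℝ) : (t : ℂ) ^ 2 + 1 ≠ 0 := by
  exact_mod_cast (by positivity : t ^ 2 + 1 ≠ 0)

lemma conj_circleTangentIntersection {ω₁ ω₂ : ℂ} (h₁ : ‖ω₁‖ = 1) (h₂ : ‖ω₂‖ = 1) :
    conj (circleTangentIntersection ω₁ ω₂) = 2 / (ω₁ + ω₂) := by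
  have hω₁ : ω₁ ≠ 0 := norm_ne_zero_iff.mp (by simp [h₁])
  have hω₂ : ω₂ ≠ 0 := norm_ne_zero_iff.mp (by simp [h₂])
  simp only [circleTangentIntersection, map_div₀, map_mul, map_add, map_ofNat,
    ← Complex.inv_eq_conj h₁, ← Complex.inv_eq_conj h₂]
  field_simp
  ring

lemma conj_ellipseTangentIntersection (t : ℝ) {ω₁ ω₂ : ℂ} (h₁ : ‖ω₁‖ = 1) (h₂ : ‖ω₂‖ = 1) :
    conj (ellipseTangentIntersection t ω₁ ω₂) =
      2 * ((t : ℂ) ^ 2 + ω₁ * ω₂) / (((t : ℂ) ^ 2 + 1) * (ω₁ + ω₂)) := by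
  have hω₁ : ω₁ ≠ 0 := norm_ne_zero_iff.mp (by simp [h₁])
  have hω₂ : ω₂ ≠ 0 := norm_ne_zero_iff.mp (by simp [h₂])
  simp only [ellipseTangentIntersection, map_div₀, map_mul, map_add, map_ofNat, map_one,
    map_pow, conj_ofReal, ← Complex.inv_eq_conj h₁, ← Complex.inv_eq_conj h₂]
  field_simp
  ring

lemma ellipseTangentIntersection_mem_ellipseTangent_left (t : ℝ) {ω₁ ω₂ : ℂ}
    (h₁ : ‖ω₁‖ = 1) (h₂ : ‖ω₂‖ = 1) (hsum : ω₁ + ω₂ ≠ 0) :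
    ellipseTangentIntersection t ω₁ ω₂ ∈ ellipseTangent t ω₁ := by
  have ht := ofReal_sq_add_one_ne_zero t
  rw [ellipseTangent, Set.mem_ofPred_eq, conj_ellipseTangentIntersection t h₁ h₂,
    ellipseTangentIntersection]
  field_simp
  ring

/-- Away from `t² = 1` and `ω₂ = ±ω₁` the two tangents are not parallel: eliminating `conj z`
leaves `(1 - t²)(ω₁ - ω₂)((t² + 1)(ω₁ + ω₂) z - 2(ω₁ω₂t² + 1)) = 0`. -/
lemma eq_ellipseTangentIntersection_of_mem {t : ℝ} (ht : t ^ 2 ≠ 1) {ω₁ ω₂ z : ℂ}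
    (hne : ω₁ ≠ ω₂) (hsum : ω₁ + ω₂ ≠ 0)
    (hz₁ : z ∈ ellipseTangent t ω₁) (hz₂ : z ∈ ellipseTangent t ω₂) :
    z = ellipseTangentIntersection t ω₁ ω₂ := by
  have hminus : 1 - (t : ℂ) ^ 2 ≠ 0 := sub_ne_zero.mpr (by exact_mod_cast ht.symm)
  have hplus := ofReal_sq_add_one_ne_zero t
  rw [ellipseTangent, Set.mem_ofPred_eq] at hz₁ hz₂
  have key : (1 - (t : ℂ) ^ 2) * (ω₁ - ω₂) *
      (((t : ℂ) ^ 2 + 1) * (ω₁ + ω₂) * z - 2 * (ω₁ * ω₂ * (t : ℂ) ^ 2 + 1)) = 0 := by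
    linear_combination (1 - (t : ℂ) ^ 2 * ω₂ ^ 2) * hz₁ - (1 - (t : ℂ) ^ 2 * ω₁ ^ 2) * hz₂
  have hz := (mul_eq_zero.mp key).resolve_left (mul_ne_zero hminus (sub_ne_zero.mpr hne))
  rw [ellipseTangentIntersection, eq_div_iff (mul_ne_zero hplus hsum)]
  linear_combination hz

lemma ellipseTangentIntersection_eq_ellipseMap (t : ℝ) {ω₁ ω₂ : ℂ}
    (h₁ : ‖ω₁‖ = 1) (h₂ : ‖ω₂‖ = 1) (hsum : ω₁ + ω₂ ≠ 0) :
    ellipseTangentIntersection t ω₁ ω₂ = ellipseMap t (circleTangentIntersection ω₁ ω₂) := by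
  have ht := ofReal_sq_add_one_ne_zero t
  have ht' : 1 + (t : ℂ) ^ 2 ≠ 0 := by rwa [add_comm]
  rw [ellipseMap, conj_circleTangentIntersection h₁ h₂, ellipseTangentIntersection,
    circleTangentIntersection]
  field_simp
  ring

/-- The tangent lines to the ellipse `E_t` at the images `φ_t(ω₁), φ_t(ω₂)` of
two points of the unit circle intersect exactly at
`z = 2(ω₁ω₂t² + 1)/((t² + 1)(ω₁ + ω₂))`, which equals
`(t²w₀ + conj w₀)/(1 + t²)` for `w₀ = 2ω₁ω₂/(ω₁ + ω₂)`. -/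
theorem tangent_lines_ellipse_intersection (t : ℝ) (ht0 : 0 < t) (ht1 : t < 1)
    (ω₁ ω₂ : ℂ) (h₁ : ‖ω₁‖ = 1) (h₂ : ‖ω₂‖ = 1)
    (hne : ω₁ ≠ ω₂) (hsum : ω₁ + ω₂ ≠ 0) :
    {z : ℂ | (ω₁ ^ 2 - (t : ℂ) ^ 2) * z - ((t : ℂ) ^ 2 * ω₁ ^ 2 - 1) * conj z +
        2 * ((t : ℂ) ^ 2 - 1) * ω₁ = 0} ∩
      {z : ℂ | (ω₂ ^ 2 - (t : ℂ) ^ 2) * z - ((t : ℂ) ^ 2 * ω₂ ^ 2 - 1) * conj z +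
        2 * ((t : ℂ) ^ 2 - 1) * ω₂ = 0} =
    {2 * (ω₁ * ω₂ * (t : ℂ) ^ 2 + 1) / (((t : ℂ) ^ 2 + 1) * (ω₁ + ω₂))} ∧
    2 * (ω₁ * ω₂ * (t : ℂ) ^ 2 + 1) / (((t : ℂ) ^ 2 + 1) * (ω₁ + ω₂)) =
      ((t : ℂ) ^ 2 * (2 * ω₁ * ω₂ / (ω₁ + ω₂)) + conj (2 * ω₁ * ω₂ / (ω₁ + ω₂))) /
        (1 + (t : ℂ) ^ 2) := by
  have ht : t ^ 2 ≠ 1 := by nlinarith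
  refine ⟨?_, ellipseTangentIntersection_eq_ellipseMap t h₁ h₂ hsum⟩
  change ellipseTangent t ω₁ ∩ ellipseTangent t ω₂ = {ellipseTangentIntersection t ω₁ ω₂}
  refine Set.eq_singleton_iff_unique_mem.mpr ⟨⟨?_, ?_⟩, ?_⟩
  · exact ellipseTangentIntersection_mem_ellipseTangent_left t h₁ h₂ hsum
  · rw [ellipseTangentIntersection_comm]
    exact ellipseTangentIntersection_mem_ellipseTangent_left t h₂ h₁ (by rwa [add_comm])
  · exact fun z ⟨hz₁, hz₂⟩ => eq_ellipseTangentIntersection_of_mem ht hne hsum hz₁ hz₂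
end

section
/- For t > 0 and w on the unit circle with w ≠ -1, ψ_t(w) = ((1-2t)w + (1+2t)conj(w) - 2)/(w + conj(w) + 2), and the resulting point z lies on the parabola (z - conj(z))² = 8t²(z + conj(z)). Moreover, w can be recovered as w = (-(z + conj(z) + 2)t + z - conj(z))/((z + conj(z) - 2)t). -/
/-!
With `u = (1 - w) / (1 + w)` one has `ψ_t(w) = u² + 2tu`. On the unit circle `conj w = w⁻¹`
makes `u` purely imaginary, so `conj z = u² - 2tu`. Hence `z + conj z = 2u²` and
`z - conj z = 4tu`: the parabola equation is immediate, and the inversion formula becomes a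
rational identity in `w`.
-/

open Complex ComplexConjugate

section Field
variable {K : Type*} [Field K]

theorem cayley_add_sq_sub_sq {w : K} (hw0 : w ≠ 0) (hw : 1 + w ≠ 0) (t : K) :
    ((1 - w) / (1 + w) + t) ^ 2 - t ^ 2 =
      ((1 - 2 * t) * w + (1 + 2 * t) * w⁻¹ - 2) / (w + w⁻¹ + 2) := by
  have hden : w + w⁻¹ + 2 = (1 + w) ^ 2 / w := by field_simp; ring
  rw [hden]
  field_simp
  ring

theorem eq_div_cayley_sq [NeZero (2 : K)] {w : K} (hw0 : w ≠ 0) (hw : 1 + w ≠ 0) {t : K}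
    (ht : t ≠ 0) :
    w = (-(2 * ((1 - w) / (1 + w)) ^ 2 + 2) * t + 4 * t * ((1 - w) / (1 + w))) /
      ((2 * ((1 - w) / (1 + w)) ^ 2 - 2) * t) := by
  have hden : 2 * ((1 - w) / (1 + w)) ^ 2 - 2 = -2 ^ 3 * w / (1 + w) ^ 2 := by
    field_simp; ring
  rw [hden, eq_div_iff (by simp [hw0, hw, ht, two_ne_zero])]
  field_simp
  ring

end Field

theorem Complex.conj_cayley_eq_neg {w : ℂ} (hw : ‖w‖ = 1) :
    conj ((1 - w) / (1 + w)) = -((1 - w) / (1 + w)) := by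
  have hw0 : w ≠ 0 := ne_zero_of_norm_ne_zero (hw ▸ one_ne_zero)
  rw [map_div₀, map_sub, map_add, map_one, ← Complex.inv_eq_conj hw,
    ← mul_div_mul_left _ _ hw0, mul_one_sub, mul_one_add, mul_inv_cancel₀ hw0, ← neg_sub,
    neg_div, add_comm]

/-- On the unit circle (away from `-1`), `ψ_t` is given by the stated boundary
formula, its values lie on the parabola `(z - conj z)² = 8t²(z + conj z)`, and
`w` can be recovered from `z = ψ_t(w)` by the stated formula. -/
theorem psi_on_circle (t : ℝ) (ht : 0 < t) (w : ℂ)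
    (hw : ‖w‖ = 1) (hw1 : w ≠ -1) :
    ∀ z : ℂ, z = ((1 - w) / (1 + w) + (t : ℂ)) ^ 2 - (t : ℂ) ^ 2 →
      z = ((1 - 2 * (t : ℂ)) * w + (1 + 2 * (t : ℂ)) * conj w - 2) /
        (w + conj w + 2) ∧
      (z - conj z) ^ 2 = 8 * (t : ℂ) ^ 2 * (z + conj z) ∧
      w = (-(z + conj z + 2) * (t : ℂ) + z - conj z) /
        ((z + conj z - 2) * (t : ℂ)) := by
  intro z hz
  have hw0 : w ≠ 0 := ne_zero_of_norm_ne_zero (hw ▸ one_ne_zero)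
  have hw1' : 1 + w ≠ 0 := fun h ↦ hw1 (eq_neg_of_add_eq_zero_right h)
  set u := (1 - w) / (1 + w)
  have hzc : conj z = (-u + t) ^ 2 - (t : ℂ) ^ 2 := by
    rw [hz, map_sub, map_pow, map_pow, map_add, Complex.conj_cayley_eq_neg hw, conj_ofReal]
  have hsum : z + conj z = 2 * u ^ 2 := by rw [hzc, hz]; ring
  have hdiff : z - conj z = 4 * t * u := by rw [hzc, hz]; ring
  refine ⟨?_, ?_, ?_⟩
  · rw [hz, ← Complex.inv_eq_conj hw]
    exact cayley_add_sq_sub_sq hw0 hw1' t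
  · rw [hsum, hdiff]; ring
  · rw [hsum, add_sub_assoc, hdiff]
    exact eq_div_cayley_sq hw0 hw1' (ofReal_ne_zero.2 ht.ne')
end

section
/- Let 0 < t < 1 and a, b ∈ 𝔻. Define U = (a-b)²t⁴ + 2(2|ab|² - |a+b|² + 2)t² + (conj(a)-conj(b))² and P = -2((2|ab|² - |a+b|² + 2)(t⁴+1) + ((a-b)² + (conj(a)-conj(b))²)t²). Then P² - 4U conj(U) = 16(1-|a|²)(1-|b|²)|1 - a conj(b)|²(t⁴-1)², which is strictly positive (assuming a conj(b) ≠ 1, which holds since a, b ∈ 𝔻, and t ≠ 1). -/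
/-!
Write `c = 2|ab|² - |a+b|² + 2` and `d = (a - b)²`, so that `U = d t⁴ + 2c t² + d̄` and
`P = -2(c(t⁴ + 1) + (d + d̄) t²)`. Expanding, every mixed term cancels and
`P² - 4|U|² = 4(c² - |d|²)(t⁴ - 1)²`. The factors of `c² - |a - b|⁴` are
`c - |a - b|² = 2(1 - |a|²)(1 - |b|²)` and `c + |a - b|² = 2|1 - a b̄|²`,
both positive for `a, b` in the open unit disc.
-/

open Complex ComplexConjugate

theorem discriminant_self_reciprocal_quartic (c t : ℝ) (d : ℂ) :
    (-2 * ((c : ℂ) * ((t : ℂ) ^ 4 + 1) + (d + conj d) * (t : ℂ) ^ 2)) ^ 2 -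
        4 * (d * (t : ℂ) ^ 4 + 2 * c * (t : ℂ) ^ 2 + conj d) *
          conj (d * (t : ℂ) ^ 4 + 2 * c * (t : ℂ) ^ 2 + conj d) =
      ((4 * (c ^ 2 - ‖d‖ ^ 2) * (t ^ 4 - 1) ^ 2 : ℝ) : ℂ) := by
  simp only [map_add, map_mul, map_pow, map_ofNat, conj_conj, conj_ofReal]
  push_cast
  rw [← mul_conj']
  ring

theorem sq_sub_norm_sub_sq_sq (a b : ℂ) :
    (2 * ‖a * b‖ ^ 2 - ‖a + b‖ ^ 2 + 2) ^ 2 - ‖(a - b) ^ 2‖ ^ 2 =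
      4 * ((1 - ‖a‖ ^ 2) * (1 - ‖b‖ ^ 2) * ‖1 - a * conj b‖ ^ 2) := by
  have h_sub : 2 * ‖a * b‖ ^ 2 - ‖a + b‖ ^ 2 + 2 - ‖a - b‖ ^ 2 =
      2 * ((1 - ‖a‖ ^ 2) * (1 - ‖b‖ ^ 2)) := by
    simp only [norm_mul, mul_pow, Complex.sq_norm, normSq_add, normSq_sub]
    ring
  have h_add : 2 * ‖a * b‖ ^ 2 - ‖a + b‖ ^ 2 + 2 + ‖a - b‖ ^ 2 =
      2 * ‖1 - a * conj b‖ ^ 2 := by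
    simp only [Complex.sq_norm, normSq_add, normSq_sub, normSq_conj, map_mul, conj_conj,
      map_one, one_mul, mul_re, conj_re, conj_im]
    ring
  calc _ = (2 * ‖a * b‖ ^ 2 - ‖a + b‖ ^ 2 + 2 - ‖a - b‖ ^ 2) *
        (2 * ‖a * b‖ ^ 2 - ‖a + b‖ ^ 2 + 2 + ‖a - b‖ ^ 2) := by rw [norm_pow]; ring
    _ = _ := by rw [h_sub, h_add]; ring

theorem one_sub_mul_conj_ne_zero {a b : ℂ} (ha : ‖a‖ < 1) (hb : ‖b‖ ≤ 1) :
    1 - a * conj b ≠ 0 := by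
  have h_lt : ‖a * conj b‖ < 1 := by
    rw [norm_mul, norm_conj]
    exact mul_lt_one_of_nonneg_of_lt_one_left (norm_nonneg a) ha hb
  rw [sub_ne_zero]
  rintro h
  rw [← h, norm_one] at h_lt
  exact lt_irrefl 1 h_lt

theorem one_sub_sq_norm_pos {a : ℂ} (ha : ‖a‖ < 1) : 0 < 1 - ‖a‖ ^ 2 := by
  have := pow_lt_one₀ (norm_nonneg a) ha two_ne_zero
  linarith

/-- The ellipse-condition discriminant identity for the interior curve of the
Blaschke-like map `φ_t ∘ B ∘ φ_t⁻¹`: `P² - 4U·conj U` equals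
`16(1-|a|²)(1-|b|²)|1 - a·conj b|²(t⁴-1)²`, which is strictly positive. -/
theorem ellipse_discriminant_joukowski (t : ℝ) (ht0 : 0 < t) (ht1 : t < 1)
    (a b : ℂ) (ha : ‖a‖ < 1) (hb : ‖b‖ < 1) (U P : ℂ)
    (hU : U = (a - b) ^ 2 * (t : ℂ) ^ 4 +
      2 * ((2 * ‖a * b‖ ^ 2 - ‖a + b‖ ^ 2 + 2 : ℝ) : ℂ) * (t : ℂ) ^ 2 +
      (conj a - conj b) ^ 2)
    (hP : P = -2 * (((2 * ‖a * b‖ ^ 2 - ‖a + b‖ ^ 2 + 2 : ℝ) : ℂ) *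
        ((t : ℂ) ^ 4 + 1) +
      ((a - b) ^ 2 + (conj a - conj b) ^ 2) * (t : ℂ) ^ 2)) :
    P ^ 2 - 4 * U * conj U =
      ((16 * (1 - ‖a‖ ^ 2) * (1 - ‖b‖ ^ 2) *
        ‖1 - a * conj b‖ ^ 2 * (t ^ 4 - 1) ^ 2 : ℝ) : ℂ) ∧
    0 < 16 * (1 - ‖a‖ ^ 2) * (1 - ‖b‖ ^ 2) *
      ‖1 - a * conj b‖ ^ 2 * (t ^ 4 - 1) ^ 2 := by
  constructor
  · have h_conj : (conj a - conj b) ^ 2 = conj ((a - b) ^ 2) := by simp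
    rw [hU, hP, h_conj, discriminant_self_reciprocal_quartic, sq_sub_norm_sub_sq_sq]
    push_cast
    ring
  · have h_t : t ^ 4 - 1 ≠ 0 := sub_ne_zero.mpr (pow_lt_one₀ ht0.le ht1 four_ne_zero).ne
    have h_a := one_sub_sq_norm_pos ha
    have h_b := one_sub_sq_norm_pos hb
    have h_ab := one_sub_mul_conj_ne_zero ha hb.le
    positivity
end
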